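/- Let F_1 and F_2 be k×k symmetric positive definite matrices and γ_1, γ_2 > 0 with γ_1 + γ_2 = 1. Suppose G is a k×k symmetric positive definite matrix with y^T F_1 y ≥ y^T G y and y^T F_2 y ≥ y^T G y for all y ∈ ℝ^k, with at least one of these inequalities strict for some y. Then det(γ_1 F_1 + γ_2 F_2) > det G. -/

import Mathlib

open Matrix
open scoped MatrixOrder

/-!
Write `A = R²` with `R = √A`. If `A ≤ B` in the Loewner order then `B = R (1 + M) R` with
`M = R⁻¹ (B - A) R⁻¹` positive semidefinite, so `det B = det A · ∏ (1 + λᵢ)` over the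
eigenvalues `λᵢ ≥ 0` of `M`; when `A ≠ B` some `λᵢ` is positive and the inequality is strict.
-/

namespace Matrix

variable {n : Type*} [Fintype n]

lemma lt_of_forall_dotProduct_mulVec_le_of_exists_lt {A B : Matrix n n ℝ}
    (hA : A.IsHermitian) (hB : B.IsHermitian) (hle : ∀ y, y ⬝ᵥ A *ᵥ y ≤ y ⬝ᵥ B *ᵥ y)
    (hlt : ∃ y, y ⬝ᵥ A *ᵥ y < y ⬝ᵥ B *ᵥ y) : A < B := by
  refine lt_of_le_of_ne ?_ ?_
  · refine le_iff.mpr (posSemidef_iff_dotProduct_mulVec.mpr ⟨hB.sub hA, fun y => ?_⟩)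
    simpa [sub_mulVec] using hle y
  · rintro rfl
    obtain ⟨y, hy⟩ := hlt
    exact hy.false

variable [DecidableEq n]

lemma IsHermitian.det_one_add {M : Matrix n n ℝ} (hM : M.IsHermitian) :
    (1 + M).det = ∏ i, (1 + hM.eigenvalues i) := by
  conv_lhs =>
    rw [hM.spectral_theorem, ← map_one (Unitary.conjStarAlgAut ℝ _ hM.eigenvectorUnitary),
      ← map_add]
  rw [Unitary.conjStarAlgAut_apply, det_mul_right_comm,
    Unitary.mul_star_self_of_mem hM.eigenvectorUnitary.2, one_mul, ← diagonal_one,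
    diagonal_add, det_diagonal]
  rfl

lemma PosSemidef.one_lt_det_one_add {M : Matrix n n ℝ} (hM : M.PosSemidef) (hM0 : M ≠ 0) :
    1 < (1 + M).det := by
  obtain ⟨i, hi⟩ := Function.ne_iff.mp (hM.1.eigenvalues_eq_zero_iff.not.mpr hM0)
  have hpos : 0 < hM.1.eigenvalues i := (hM.eigenvalues_nonneg i).lt_of_ne' hi
  calc (1 : ℝ) = ∏ _j : n, 1 := Finset.prod_const_one.symm
    _ < ∏ j, (1 + hM.1.eigenvalues j) :=
      Finset.prod_lt_prod (fun _ _ => one_pos)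
        (fun j _ => le_add_of_nonneg_right (hM.eigenvalues_nonneg j))
        ⟨i, Finset.mem_univ _, lt_add_of_pos_right _ hpos⟩
    _ = (1 + M).det := hM.1.det_one_add.symm

lemma PosDef.det_lt_det_of_lt {A B : Matrix n n ℝ} (hA : A.PosDef) (hAB : A < B) :
    A.det < B.det := by
  obtain ⟨hle, hne⟩ := lt_iff_le_and_ne.mp hAB
  set R := CFC.sqrt A
  have hR : R.PosDef := hA.isStrictlyPositive.sqrt.posDef
  have hRR : R * R = A := CFC.sqrt_mul_sqrt_self A hA.posSemidef.nonneg
  have hRu : IsUnit R.det := (isUnit_iff_isUnit_det R).mp hR.isUnit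
  set M := R⁻¹ * (B - A) * R⁻¹
  have hRMR : R * M * R = B - A := by
    simp only [M, ← mul_assoc, mul_nonsing_inv R hRu, one_mul]
    rw [mul_assoc, nonsing_inv_mul R hRu, mul_one]
  have hM : M.PosSemidef := by
    simpa only [hR.inv.isHermitian.eq] using (le_iff.mp hle).conjTranspose_mul_mul_same R⁻¹
  have hM0 : M ≠ 0 := by
    rintro hM0
    rw [hM0, mul_zero, zero_mul, eq_comm, sub_eq_zero] at hRMR
    exact hne hRMR.symm
  have hB : B = R * (1 + M) * R := by
    rw [mul_add, add_mul, mul_one, hRR, hRMR, add_sub_cancel]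
  have hdet : B.det = A.det * (1 + M).det := by
    rw [hB, det_mul, det_mul, ← hRR, det_mul]
    ring
  rw [hdet]
  exact lt_mul_of_one_lt_right hA.det_pos (hM.one_lt_det_one_add hM0)

end Matrix

theorem stmt9_general {k : ℕ} (F₁ F₂ G : Matrix (Fin k) (Fin k) ℝ)
    (hF₁sym : F₁.IsSymm) (hF₂sym : F₂.IsSymm) (hGpd : G.PosDef)
    (γ₁ γ₂ : ℝ) (hγ₁ : 0 < γ₁) (hγ₂ : 0 < γ₂) (hsum : γ₁ + γ₂ = 1)
    (hle1 : ∀ y : Fin k → ℝ, y ⬝ᵥ G.mulVec y ≤ y ⬝ᵥ F₁.mulVec y)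
    (hle2 : ∀ y : Fin k → ℝ, y ⬝ᵥ G.mulVec y ≤ y ⬝ᵥ F₂.mulVec y)
    (hstrict : ∃ y : Fin k → ℝ,
      y ⬝ᵥ G.mulVec y < y ⬝ᵥ F₁.mulVec y ∨ y ⬝ᵥ G.mulVec y < y ⬝ᵥ F₂.mulVec y) :
    G.det < (γ₁ • F₁ + γ₂ • F₂).det := by
  have hH : (γ₁ • F₁ + γ₂ • F₂).IsHermitian :=
    isHermitian_iff_isSymm.mpr ((hF₁sym.smul γ₁).add (hF₂sym.smul γ₂))
  have hgap : ∀ y : Fin k → ℝ,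
      y ⬝ᵥ (γ₁ • F₁ + γ₂ • F₂) *ᵥ y - y ⬝ᵥ G *ᵥ y =
        γ₁ * (y ⬝ᵥ F₁ *ᵥ y - y ⬝ᵥ G *ᵥ y) + γ₂ * (y ⬝ᵥ F₂ *ᵥ y - y ⬝ᵥ G *ᵥ y) := by
    intro y
    simp only [add_mulVec, smul_mulVec, dotProduct_add, dotProduct_smul, smul_eq_mul]
    linear_combination (y ⬝ᵥ G *ᵥ y) * hsum
  refine hGpd.det_lt_det_of_lt (lt_of_forall_dotProduct_mulVec_le_of_exists_lt hGpd.1 hH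
    (fun y => sub_nonneg.mp ?_) ?_)
  · rw [hgap]
    exact add_nonneg (mul_nonneg hγ₁.le (sub_nonneg.mpr (hle1 y)))
      (mul_nonneg hγ₂.le (sub_nonneg.mpr (hle2 y)))
  · obtain ⟨y, hy | hy⟩ := hstrict <;> refine ⟨y, sub_pos.mp ?_⟩ <;> rw [hgap]
    · exact add_pos_of_pos_of_nonneg (mul_pos hγ₁ (sub_pos.mpr hy))
        (mul_nonneg hγ₂.le (sub_nonneg.mpr (hle2 y)))
    · exact add_pos_of_nonneg_of_pos (mul_nonneg hγ₁.le (sub_nonneg.mpr (hle1 y)))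
        (mul_pos hγ₂ (sub_pos.mpr hy))

/-- Determinant comparison for a convex combination of two symmetric positive
definite matrices dominating a third. -/
theorem stmt9 {k : ℕ} (F₁ F₂ G : Matrix (Fin k) (Fin k) ℝ)
    (hF₁sym : F₁.IsSymm) (hF₂sym : F₂.IsSymm) (hGsym : G.IsSymm)
    (hF₁pd : F₁.PosDef) (hF₂pd : F₂.PosDef) (hGpd : G.PosDef)
    (γ₁ γ₂ : ℝ) (hγ₁ : 0 < γ₁) (hγ₂ : 0 < γ₂) (hsum : γ₁ + γ₂ = 1)
    (hle1 : ∀ y : Fin k → ℝ, y ⬝ᵥ G.mulVec y ≤ y ⬝ᵥ F₁.mulVec y)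
    (hle2 : ∀ y : Fin k → ℝ, y ⬝ᵥ G.mulVec y ≤ y ⬝ᵥ F₂.mulVec y)
    (hstrict : ∃ y : Fin k → ℝ,
      y ⬝ᵥ G.mulVec y < y ⬝ᵥ F₁.mulVec y ∨ y ⬝ᵥ G.mulVec y < y ⬝ᵥ F₂.mulVec y) :
    G.det < (γ₁ • F₁ + γ₂ • F₂).det :=
  stmt9_general F₁ F₂ G hF₁sym hF₂sym hGpd γ₁ γ₂ hγ₁ hγ₂ hsum hle1 hle2 hstrict
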